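/- The term rewriting system obtained by orienting the four CP axioms from left to right is strongly normalizing on closed conditional expressions. -/

import Mathlib

/-!
A polynomial interpretation in the positive integers: constants and atoms weigh `1` and
`x ◁ y ▷ z` weighs `[y] * ([x] + [z] + 1)`. This is strictly monotone in every argument, and every
rule strictly decreases it; the distribution rule loses exactly `[z] * ([x] + [v])`.
-/

inductive CE (A : Type) : Type
  | tt : CE A
  | ff : CE A
  | atom : A → CE A
  | cond : CE A → CE A → CE A → CE A

/-- One-step rewriting: the CP axioms oriented left to right, closed under contexts. -/
inductive Rw {A : Type} : CE A → CE A → Prop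
  | r1 (x y) : Rw (.cond x .tt y) x
  | r2 (x y) : Rw (.cond x .ff y) y
  | r3 (x) : Rw (.cond .tt x .ff) x
  | r4 (x y z u v) : Rw (.cond x (.cond y z u) v) (.cond (.cond x y v) z (.cond x u v))
  | congL {x x'} (y z) : Rw x x' → Rw (.cond x y z) (.cond x' y z)
  | congM {y y'} (x z) : Rw y y' → Rw (.cond x y z) (.cond x y' z)
  | congR {z z'} (x y) : Rw z z' → Rw (.cond x y z) (.cond x y z')

namespace CE

variable {A : Type}

def weight : CE A → ℕ
  | tt => 1
  | ff => 1
  | atom _ => 1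
  | cond x y z => y.weight * (x.weight + z.weight + 1)

theorem one_le_weight (t : CE A) : 1 ≤ t.weight := by
  induction t with
  | tt | ff | atom => rfl
  | cond x y z _ hy _ => exact one_le_mul hy (Nat.le_add_left 1 _)

end CE

namespace Rw

variable {A : Type}

theorem weight_lt {s t : CE A} (h : Rw s t) : t.weight < s.weight := by
  induction h with
  | r1 x y | r2 x y => simp only [CE.weight, one_mul]; omega
  | r3 x => simp only [CE.weight]; have := x.one_le_weight; omega
  | r4 x y z u v =>
    simp only [CE.weight]
    nlinarith [x.one_le_weight, z.one_le_weight]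
  | congL y z _ ih =>
    simp only [CE.weight]
    exact Nat.mul_lt_mul_of_pos_left (by omega) y.one_le_weight
  | congR x y _ ih =>
    simp only [CE.weight]
    exact Nat.mul_lt_mul_of_pos_left (by omega) y.one_le_weight
  | congM x z _ ih =>
    simp only [CE.weight]
    exact Nat.mul_lt_mul_of_pos_right ih (Nat.succ_pos _)

theorem wellFounded_flip : WellFounded (flip (@Rw A)) :=
  Subrelation.wf (fun h ↦ weight_lt h) (InvImage.wf CE.weight wellFounded_lt)

end Rw

theorem rw_strongly_normalizing (A : Type) (f : ℕ → CE A) :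
    ¬ (∀ n, Rw (f n) (f (n + 1))) := by
  intro h
  obtain ⟨n, hn⟩ := @WellFounded.not_rel_apply_succ _ (flip Rw) ⟨Rw.wellFounded_flip⟩ f
  exact hn (h n)
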